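/- For every d ∈ ℕ, the correlated stochastic quantizers satisfy ε-parameter-based local differential privacy (condition C5): for each component k ∈ {1, 2}, each output value v ∈ {c − r·α(ε), c + r·α(ε)}, and any two inputs u, u′ ∈ [c−r, c+r], the probability that Qk at input u equals v is at most e^ε times the probability that Qk at input u′ equals v. -/

import Mathlib

open Real Set Finset

/-- `α(ε) = (e^ε + 1)/(e^ε − 1)`. -/
noncomputable def alphaFn (ε : ℝ) : ℝ := (Real.exp ε + 1) / (Real.exp ε - 1)

/-- `q(u) = 1/2 + (u − c)/(2rα(ε))`, the probability of the `+` level for input `u`. -/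
noncomputable def qOf (c r ε u : ℝ) : ℝ := 1 / 2 + (u - c) / (2 * r * alphaFn ε)

/-- `T1 = ⌊2^d · q1⌋`. -/
noncomputable def T1 (c r ε : ℝ) (d : ℕ) (w : ℝ) : ℤ := ⌊(2 : ℝ) ^ d * qOf c r ε w⌋

/-- `P(U = +1) = 2^d·q1 − ⌊2^d·q1⌋`. -/
noncomputable def pU1 (c r ε : ℝ) (d : ℕ) (w : ℝ) : ℝ :=
  (2 : ℝ) ^ d * qOf c r ε w - ⌊(2 : ℝ) ^ d * qOf c r ε w⌋

/-- `T2 = ⌊2^d · (1 − q2)⌋`. -/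
noncomputable def T2 (c r ε : ℝ) (d : ℕ) (w' : ℝ) : ℤ := ⌊(2 : ℝ) ^ d * (1 - qOf c r ε w')⌋

/-- `P(U' = +1) = 2^d·(1 − q2) − ⌊2^d·(1 − q2)⌋`. -/
noncomputable def pU2 (c r ε : ℝ) (d : ℕ) (w' : ℝ) : ℝ :=
  (2 : ℝ) ^ d * (1 - qOf c r ε w') - ⌊(2 : ℝ) ^ d * (1 - qOf c r ε w')⌋

/-- Value of the first correlated quantizer `Q1` on outcome `(z, u)`:
`c + rα` if `z < T1`, `c − rα` if `z > T1`, and `c + U·rα` if `z = T1`. -/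
noncomputable def Q1val (c r ε : ℝ) (d : ℕ) (w : ℝ) (z : ℕ) (u : Bool) : ℝ :=
  if (z : ℤ) < T1 c r ε d w then c + r * alphaFn ε
  else if T1 c r ε d w < (z : ℤ) then c - r * alphaFn ε
  else c + (if u then 1 else -1) * r * alphaFn ε

/-- Value of the second correlated quantizer `Q2` on outcome `(z, u')`:
`c − rα` if `z < T2`, `c + rα` if `z > T2`, and `c − U'·rα` if `z = T2`. -/
noncomputable def Q2val (c r ε : ℝ) (d : ℕ) (w' : ℝ) (z : ℕ) (u' : Bool) : ℝ :=
  if (z : ℤ) < T2 c r ε d w' then c - r * alphaFn ε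
  else if T2 c r ε d w' < (z : ℤ) then c + r * alphaFn ε
  else c - (if u' then 1 else -1) * r * alphaFn ε

/-- Joint pmf of the outcome `(Z, U, U')`: `Z` uniform on `{0, …, 2^d − 1}` and `Z, U, U'`
mutually independent (`u = true` encodes `U = +1`, `u' = true` encodes `U' = +1`). -/
noncomputable def μjoint (c r ε : ℝ) (d : ℕ) (w w' : ℝ) (z : ℕ) (u u' : Bool) : ℝ :=
  ((2 : ℝ) ^ d)⁻¹ * (if u then pU1 c r ε d w else 1 - pU1 c r ε d w) *
    (if u' then pU2 c r ε d w' else 1 - pU2 c r ε d w')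

/-- `P(Q1 = v)` when the first correlated quantizer is run on input `u`. -/
noncomputable def prob1 (c r ε : ℝ) (d : ℕ) (u v : ℝ) : ℝ :=
  ∑ z ∈ Finset.range (2 ^ d), ∑ b : Bool,
    ((2 : ℝ) ^ d)⁻¹ * (if b then pU1 c r ε d u else 1 - pU1 c r ε d u) *
      (if Q1val c r ε d u z b = v then 1 else 0)

/-- `P(Q2 = v)` when the second correlated quantizer is run on input `u`. -/
noncomputable def prob2 (c r ε : ℝ) (d : ℕ) (u v : ℝ) : ℝ :=
  ∑ z ∈ Finset.range (2 ^ d), ∑ b : Bool,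
    ((2 : ℝ) ^ d)⁻¹ * (if b then pU2 c r ε d u else 1 - pU2 c r ε d u) *
      (if Q2val c r ε d u z b = v then 1 else 0)

/-!
Both quantizers are dithered roundings against the uniform `Z`: for `x = 2^d q`, the levels
`z < ⌊x⌋` always round up and `z = ⌊x⌋` rounds up with probability `fract x`, so in total
`P(Q1 = c + rα) = x / 2^d = q(u)` exactly, for every `d`; likewise `P(Q2 = c + rα) = q(u)`.
For `|u - c| ≤ r` both `q(u)` and `1 - q(u)` lie in `[1/(e^ε+1), e^ε/(e^ε+1)]`, an interval
whose endpoints have ratio exactly `e^ε`.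
-/

lemma sum_bool_ite_weight (p : ℝ) : ∑ b : Bool, (if b then p else 1 - p) = 1 := by
  simp

section Dither

variable {N : ℕ} {x : ℝ}

lemma sum_range_dither (hx₀ : 0 ≤ x) (hxN : x < N) :
    ∑ z ∈ range N, ∑ b : Bool, (if b then Int.fract x else 1 - Int.fract x) *
      (if (z : ℤ) < ⌊x⌋ ∨ ((z : ℤ) = ⌊x⌋ ∧ b = true) then 1 else 0) = x := by
  have hm : ⌊x⌋₊ < N := (Nat.floor_lt hx₀).mpr hxN
  have hinner : ∀ z : ℕ, ∑ b : Bool, (if b then Int.fract x else 1 - Int.fract x) *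
      (if (z : ℤ) < ⌊x⌋ ∨ ((z : ℤ) = ⌊x⌋ ∧ b = true) then 1 else 0) =
      if z < ⌊x⌋₊ then 1 else if z = ⌊x⌋₊ then Int.fract x else 0 := by
    intro z
    rw [← Int.natCast_floor_eq_floor hx₀]
    rcases lt_trichotomy z ⌊x⌋₊ with h | rfl | h
    · simp [h]
    · simp
    · simp [h.not_gt, h.ne']
  rw [sum_congr rfl fun z _ => hinner z, ← sum_range_add_sum_Ico _ hm.le,
    sum_eq_sum_Ico_succ_bot hm]
  have hbelow : ∑ z ∈ range ⌊x⌋₊,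
      (if z < ⌊x⌋₊ then (1 : ℝ) else if z = ⌊x⌋₊ then Int.fract x else 0) =
        ⌊x⌋₊ := by
    rw [sum_congr rfl fun z hz => if_pos (mem_range.mp hz)]; simp
  have habove : ∑ z ∈ Ico (⌊x⌋₊ + 1) N,
      (if z < ⌊x⌋₊ then (1 : ℝ) else if z = ⌊x⌋₊ then Int.fract x else 0) = 0 :=
    sum_eq_zero fun z hz => by
      have := (mem_Ico.mp hz).1
      rw [if_neg (by omega), if_neg (by omega)]
  rw [hbelow, habove, if_neg (lt_irrefl _), if_pos rfl, Int.fract,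
    ← Int.natCast_floor_eq_floor hx₀]
  push_cast; ring

lemma sum_range_dither_compl (hx₀ : 0 ≤ x) (hxN : x < N) :
    ∑ z ∈ range N, ∑ b : Bool, (if b then Int.fract x else 1 - Int.fract x) *
      (if ¬((z : ℤ) < ⌊x⌋ ∨ ((z : ℤ) = ⌊x⌋ ∧ b = true)) then 1 else 0) =
        N - x := by
  have hsplit : ∀ (w : ℝ) (P : Prop) [Decidable P],
      w * (if ¬P then 1 else 0) = w - w * (if P then 1 else 0) := by
    intro w P _; split_ifs <;> simp
  simp only [hsplit, sum_sub_distrib, sum_bool_ite_weight, sum_range_dither hx₀ hxN]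
  simp

end Dither

section Quantizers

variable {c r ε u : ℝ} {d : ℕ} {z : ℕ} {b : Bool}

lemma Q1val_eq_add_iff (h : r * alphaFn ε ≠ 0) :
    Q1val c r ε d u z b = c + r * alphaFn ε ↔
      (z : ℤ) < T1 c r ε d u ∨ ((z : ℤ) = T1 c r ε d u ∧ b = true) := by
  have hne : c - r * alphaFn ε ≠ c + r * alphaFn ε := fun h' => h (by linarith)
  unfold Q1val
  rcases lt_trichotomy (z : ℤ) (T1 c r ε d u) with hz | hz | hz
  · simp [hz]
  · cases b <;> simp [hz, hne, ← sub_eq_add_neg]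
  · simp [hz, hz.not_gt, hz.ne', hne]

lemma Q1val_eq_sub_iff (h : r * alphaFn ε ≠ 0) :
    Q1val c r ε d u z b = c - r * alphaFn ε ↔
      ¬((z : ℤ) < T1 c r ε d u ∨ ((z : ℤ) = T1 c r ε d u ∧ b = true)) := by
  have hne : c + r * alphaFn ε ≠ c - r * alphaFn ε := fun h' => h (by linarith)
  unfold Q1val
  rcases lt_trichotomy (z : ℤ) (T1 c r ε d u) with hz | hz | hz
  · simp [hz, hne]
  · cases b <;> simp [hz, hne, ← sub_eq_add_neg]
  · simp [hz, hz.not_gt, hz.ne']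

lemma Q2val_eq_sub_iff (h : r * alphaFn ε ≠ 0) :
    Q2val c r ε d u z b = c - r * alphaFn ε ↔
      (z : ℤ) < T2 c r ε d u ∨ ((z : ℤ) = T2 c r ε d u ∧ b = true) := by
  have hne : c + r * alphaFn ε ≠ c - r * alphaFn ε := fun h' => h (by linarith)
  unfold Q2val
  rcases lt_trichotomy (z : ℤ) (T2 c r ε d u) with hz | hz | hz
  · simp [hz]
  · cases b <;> simp [hz, hne]
  · simp [hz, hz.not_gt, hz.ne', hne]

lemma Q2val_eq_add_iff (h : r * alphaFn ε ≠ 0) :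
    Q2val c r ε d u z b = c + r * alphaFn ε ↔
      ¬((z : ℤ) < T2 c r ε d u ∨ ((z : ℤ) = T2 c r ε d u ∧ b = true)) := by
  have hne : c - r * alphaFn ε ≠ c + r * alphaFn ε := fun h' => h (by linarith)
  unfold Q2val
  rcases lt_trichotomy (z : ℤ) (T2 c r ε d u) with hz | hz | hz
  · simp [hz, hne]
  · cases b <;> simp [hz, hne]
  · simp [hz, hz.not_gt, hz.ne']

lemma pU1_eq_fract : pU1 c r ε d u = Int.fract (2 ^ d * qOf c r ε u) := rfl

lemma pU2_eq_fract : pU2 c r ε d u = Int.fract (2 ^ d * (1 - qOf c r ε u)) := rfl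

lemma prob1_add (h : r * alphaFn ε ≠ 0) (hq : qOf c r ε u ∈ Set.Ico 0 1) :
    prob1 c r ε d u (c + r * alphaFn ε) = qOf c r ε u := by
  have key := sum_range_dither (N := 2 ^ d) (x := 2 ^ d * qOf c r ε u)
    (mul_nonneg (by positivity) hq.1)
    (by push_cast; exact mul_lt_of_lt_one_right (by positivity) hq.2)
  simp only [prob1, Q1val_eq_add_iff h, pU1_eq_fract, T1, mul_assoc, ← mul_sum]
  rw [key]
  field_simp

lemma prob1_sub (h : r * alphaFn ε ≠ 0) (hq : qOf c r ε u ∈ Set.Ico 0 1) :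
    prob1 c r ε d u (c - r * alphaFn ε) = 1 - qOf c r ε u := by
  have key := sum_range_dither_compl (N := 2 ^ d) (x := 2 ^ d * qOf c r ε u)
    (mul_nonneg (by positivity) hq.1)
    (by push_cast; exact mul_lt_of_lt_one_right (by positivity) hq.2)
  push_cast at key
  simp only [prob1, Q1val_eq_sub_iff h, pU1_eq_fract, T1, mul_assoc, ← mul_sum]
  rw [key]
  field_simp

lemma prob2_sub (h : r * alphaFn ε ≠ 0) (hq : qOf c r ε u ∈ Set.Ioc 0 1) :
    prob2 c r ε d u (c - r * alphaFn ε) = 1 - qOf c r ε u := by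
  have key := sum_range_dither (N := 2 ^ d) (x := 2 ^ d * (1 - qOf c r ε u))
    (mul_nonneg (by positivity) (sub_nonneg.mpr hq.2))
    (by push_cast; exact mul_lt_of_lt_one_right (by positivity) (sub_lt_self 1 hq.1))
  simp only [prob2, Q2val_eq_sub_iff h, pU2_eq_fract, T2, mul_assoc, ← mul_sum]
  rw [key]
  field_simp

lemma prob2_add (h : r * alphaFn ε ≠ 0) (hq : qOf c r ε u ∈ Set.Ioc 0 1) :
    prob2 c r ε d u (c + r * alphaFn ε) = qOf c r ε u := by
  have key := sum_range_dither_compl (N := 2 ^ d) (x := 2 ^ d * (1 - qOf c r ε u))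
    (mul_nonneg (by positivity) (sub_nonneg.mpr hq.2))
    (by push_cast; exact mul_lt_of_lt_one_right (by positivity) (sub_lt_self 1 hq.1))
  push_cast at key
  simp only [prob2, Q2val_eq_add_iff h, pU2_eq_fract, T2, mul_assoc, ← mul_sum]
  rw [key]
  field_simp
  ring

end Quantizers

section PrivacyBound

variable {c r ε u u' : ℝ}

lemma alphaFn_pos (hε : 0 < ε) : 0 < alphaFn ε := by
  have he : 1 < exp ε := Real.one_lt_exp_iff.mpr hε
  unfold alphaFn
  bound

lemma qOf_mem_Icc (hr : 0 < r) (hε : 0 < ε) (hu : u ∈ Icc (c - r) (c + r)) :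
    qOf c r ε u ∈ Icc (1 / (exp ε + 1)) (exp ε / (exp ε + 1)) := by
  have he : 1 < exp ε := Real.one_lt_exp_iff.mpr hε
  have hk : 0 ≤ (exp ε - 1) / (2 * (exp ε + 1)) := by bound
  have hq : qOf c r ε u = 1 / 2 + (u - c) / r * ((exp ε - 1) / (2 * (exp ε + 1))) := by
    unfold qOf alphaFn
    field_simp
  have ht : (u - c) / r ∈ Set.Icc (-1) 1 := by
    obtain ⟨hu₁, hu₂⟩ := hu
    constructor
    · rw [le_div_iff₀ hr]; linarith
    · rw [div_le_one hr]; linarith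
  have hlo : 1 / (exp ε + 1) = 1 / 2 - (exp ε - 1) / (2 * (exp ε + 1)) := by field_simp; ring
  have hhi : exp ε / (exp ε + 1) = 1 / 2 + (exp ε - 1) / (2 * (exp ε + 1)) := by
    field_simp; ring
  rw [hq, hlo, hhi]
  constructor <;> nlinarith [ht.1, ht.2]

lemma qOf_mem_Ioo (hr : 0 < r) (hε : 0 < ε) (hu : u ∈ Icc (c - r) (c + r)) :
    qOf c r ε u ∈ Set.Ioo 0 1 := by
  obtain ⟨hlo, hhi⟩ := qOf_mem_Icc hr hε hu
  have he := exp_pos ε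
  constructor
  · exact lt_of_lt_of_le (by positivity) hlo
  · exact hhi.trans_lt ((div_lt_one (by positivity)).mpr (lt_add_one _))

lemma qOf_le_exp_mul_qOf (hr : 0 < r) (hε : 0 < ε) (hu : u ∈ Icc (c - r) (c + r))
    (hu' : u' ∈ Icc (c - r) (c + r)) : qOf c r ε u ≤ exp ε * qOf c r ε u' :=
  calc qOf c r ε u ≤ exp ε / (exp ε + 1) := (qOf_mem_Icc hr hε hu).2
    _ = exp ε * (1 / (exp ε + 1)) := by ring
    _ ≤ exp ε * qOf c r ε u' := by gcongr; exact (qOf_mem_Icc hr hε hu').1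

lemma one_sub_qOf : 1 - qOf c r ε u = qOf c r ε (2 * c - u) := by
  unfold qOf; ring

lemma one_sub_qOf_le_exp_mul (hr : 0 < r) (hε : 0 < ε) (hu : u ∈ Icc (c - r) (c + r))
    (hu' : u' ∈ Icc (c - r) (c + r)) : 1 - qOf c r ε u ≤ exp ε * (1 - qOf c r ε u') := by
  have reflect : ∀ {x}, x ∈ Icc (c - r) (c + r) → 2 * c - x ∈ Icc (c - r) (c + r) :=
    fun ⟨h₁, h₂⟩ => ⟨by linarith, by linarith⟩
  rw [one_sub_qOf, one_sub_qOf]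
  exact qOf_le_exp_mul_qOf hr hε (reflect hu) (reflect hu')

end PrivacyBound

/-- for every `d ∈ ℕ`, the correlated stochastic quantizers satisfy
`ε`-parameter-based local differential privacy (condition C5): for each component,
each output value `v ∈ {c − rα(ε), c + rα(ε)}`, and any inputs `u, u' ∈ [c−r, c+r]`,
the probability of outputting `v` on input `u` is at most `e^ε` times that on input `u'`. -/
theorem stmt6 (c r ε : ℝ) (hr : 0 < r) (hε : 0 < ε) (d : ℕ) :
    ∀ u ∈ Icc (c - r) (c + r), ∀ u' ∈ Icc (c - r) (c + r),
      ∀ v ∈ ({c - r * alphaFn ε, c + r * alphaFn ε} : Set ℝ),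
        prob1 c r ε d u v ≤ Real.exp ε * prob1 c r ε d u' v ∧
        prob2 c r ε d u v ≤ Real.exp ε * prob2 c r ε d u' v := by
  intro u hu u' hu' v hv
  have h : r * alphaFn ε ≠ 0 := (mul_pos hr (alphaFn_pos hε)).ne'
  have hq := qOf_mem_Ioo hr hε hu
  have hq' := qOf_mem_Ioo hr hε hu'
  rcases hv with rfl | rfl
  · rw [prob1_sub h (Ioo_subset_Ico_self hq), prob1_sub h (Ioo_subset_Ico_self hq'),
      prob2_sub h (Ioo_subset_Ioc_self hq), prob2_sub h (Ioo_subset_Ioc_self hq')]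
    exact ⟨one_sub_qOf_le_exp_mul hr hε hu hu', one_sub_qOf_le_exp_mul hr hε hu hu'⟩
  · rw [prob1_add h (Ioo_subset_Ico_self hq), prob1_add h (Ioo_subset_Ico_self hq'),
      prob2_add h (Ioo_subset_Ioc_self hq), prob2_add h (Ioo_subset_Ioc_self hq')]
    exact ⟨qOf_le_exp_mul_qOf hr hε hu hu', qOf_le_exp_mul_qOf hr hε hu hu'⟩
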